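/- Reduction of a product: in Polymorphic System I, if ⟨r₁,r₂⟩ ⇄* s ↪ t, then there exist u₁, u₂ with t ⇄* ⟨u₁,u₂⟩ such that either both rᵢ reduce (modulo ⇄*) to uᵢ, or exactly one of r₁, r₂ reduces modulo ⇄* to the corresponding uᵢ while the other is ⇄*-equivalent to it. -/

import Mathlib

/-- Types of Polymorphic System I: variables, arrows, conjunctions, universal types. -/
inductive Ty : Type
  | var : ℕ → Ty
  | arr : Ty → Ty → Ty
  | conj : Ty → Ty → Ty
  | all : ℕ → Ty → Ty
deriving DecidableEq

/-- Free type variables. -/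
def ftv : Ty → Finset ℕ
  | .var X => {X}
  | .arr A B => ftv A ∪ ftv B
  | .conj A B => ftv A ∪ ftv B
  | .all X A => ftv A \ {X}

/-- Type isomorphism ≡: the smallest congruence generated by the six isomorphisms of PSI. -/
inductive TyEquiv : Ty → Ty → Prop
  | comm (A B) : TyEquiv (.conj A B) (.conj B A)
  | assoc (A B C) : TyEquiv (.conj A (.conj B C)) (.conj (.conj A B) C)
  | distArr (A B C) : TyEquiv (.arr A (.conj B C)) (.conj (.arr A B) (.arr A C))
  | curry (A B C) : TyEquiv (.arr (.conj A B) C) (.arr A (.arr B C))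
  | allArr (X A B) : X ∉ ftv A → TyEquiv (.all X (.arr A B)) (.arr A (.all X B))
  | allConj (X A B) : TyEquiv (.all X (.conj A B)) (.conj (.all X A) (.all X B))
  | refl (A) : TyEquiv A A
  | symm {A B} : TyEquiv A B → TyEquiv B A
  | trans {A B C} : TyEquiv A B → TyEquiv B C → TyEquiv A C
  | congArr {A A' B B'} : TyEquiv A A' → TyEquiv B B' → TyEquiv (.arr A B) (.arr A' B')
  | congConj {A A' B B'} : TyEquiv A A' → TyEquiv B B' → TyEquiv (.conj A B) (.conj A' B')
  | congAll (X) {A B} : TyEquiv A B → TyEquiv (.all X A) (.all X B)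

/-- Auxiliary for PF: turn ∀X⃗.(C ⇒ Y) into ∀X⃗.((A ∧ C) ⇒ Y). -/
def pushArr (A : Ty) : Ty → Ty
  | .all X t => .all X (pushArr A t)
  | .arr C Y => .arr (.conj A C) Y
  | t => t

/-- Multiset of prime factors of a type. -/
def PF : Ty → Multiset Ty
  | .var X => {.var X}
  | .arr A B => (PF B).map (pushArr A)
  | .conj A B => PF A + PF B
  | .all X A => (PF A).map (.all X)

/-- Being of the form ∀X₁...∀Xₙ.(B ⇒ Y) with Y a type variable. -/
inductive IsPrimeForm : Ty → Prop
  | base (B Y) : IsPrimeForm (.arr B (.var Y))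
  | step (X) {t} : IsPrimeForm t → IsPrimeForm (.all X t)

/-- Conjunction of a (nonempty) list of types, A₁ ∧ ... ∧ Aₙ. -/
def conjList : List Ty → Ty
  | [] => .var 0
  | [A] => A
  | A :: l => .conj A (conjList l)

/-- ∀X₁...∀Xₙ.A -/
def allList (l : List ℕ) (A : Ty) : Ty := l.foldr .all A

/-- Substitution of a type for a type variable in a type. -/
def substTy (X : ℕ) (B : Ty) : Ty → Ty
  | .var Y => if Y = X then B else .var Y
  | .arr C D => .arr (substTy X B C) (substTy X B D)
  | .conj C D => .conj (substTy X B C) (substTy X B D)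
  | .all Y C => if Y = X then .all Y C else .all Y (substTy X B C)

/-- Terms of PSI (Church style). -/
inductive Tm : Type
  | var : ℕ → Ty → Tm
  | lam : ℕ → Ty → Tm → Tm
  | app : Tm → Tm → Tm
  | pair : Tm → Tm → Tm
  | proj : Ty → Tm → Tm
  | tlam : ℕ → Tm → Tm
  | tapp : Tm → Ty → Tm

/-- Substitution of a term for a term variable. -/
def substTm (x : ℕ) (s : Tm) : Tm → Tm
  | .var y A => if y = x then s else .var y A
  | .lam y A r => if y = x then .lam y A r else .lam y A (substTm x s r)
  | .app r t => .app (substTm x s r) (substTm x s t)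
  | .pair r t => .pair (substTm x s r) (substTm x s t)
  | .proj A r => .proj A (substTm x s r)
  | .tlam X r => .tlam X (substTm x s r)
  | .tapp r A => .tapp (substTm x s r) A

/-- Substitution of a type for a type variable in a term. -/
def substTyTm (X : ℕ) (B : Ty) : Tm → Tm
  | .var y A => .var y (substTy X B A)
  | .lam y A r => .lam y (substTy X B A) (substTyTm X B r)
  | .app r t => .app (substTyTm X B r) (substTyTm X B t)
  | .pair r t => .pair (substTyTm X B r) (substTyTm X B t)
  | .proj A r => .proj (substTy X B A) (substTyTm X B r)
  | .tlam Y r => if Y = X then .tlam Y r else .tlam Y (substTyTm X B r)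
  | .tapp r A => .tapp (substTyTm X B r) (substTy X B A)

abbrev Ctx := List (ℕ × Ty)

def ftvCtx (Γ : Ctx) : Finset ℕ := Γ.foldr (fun p s => ftv p.2 ∪ s) ∅

def substCtx (X : ℕ) (B : Ty) (Γ : Ctx) : Ctx := Γ.map (fun p => (p.1, substTy X B p.2))

/-- Typing relation of PSI. -/
inductive Typing : Ctx → Tm → Ty → Prop
  | ax {Γ x A} : (x, A) ∈ Γ → Typing Γ (.var x A) A
  | equiv {Γ r A B} : Typing Γ r A → TyEquiv A B → Typing Γ r B
  | arrI {Γ x A r B} : Typing ((x, A) :: Γ) r B → Typing Γ (.lam x A r) (.arr A B)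
  | arrE {Γ r s A B} : Typing Γ r (.arr A B) → Typing Γ s A → Typing Γ (.app r s) B
  | conjI {Γ r s A B} : Typing Γ r A → Typing Γ s B → Typing Γ (.pair r s) (.conj A B)
  | conjE {Γ r A B} : Typing Γ r (.conj A B) → Typing Γ (.proj A r) A
  | allI {Γ r X A} : Typing Γ r A → X ∉ ftvCtx Γ → Typing Γ (.tlam X r) (.all X A)
  | allE {Γ r X A B} : Typing Γ r (.all X A) → Typing Γ (.tapp r B) (substTy X B A)

/-- "r has type A" (context is redundant in Church style). -/
def HasTy (r : Tm) (A : Ty) : Prop := ∃ Γ, Typing Γ r A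

/-- One-step structural equivalence ⇄ (symmetric, closed under all term contexts). -/
inductive StEq : Tm → Tm → Prop
  | comm (r s) : StEq (.pair r s) (.pair s r)
  | assoc (r s t) : StEq (.pair r (.pair s t)) (.pair (.pair r s) t)
  | distLam (x A r s) : StEq (.lam x A (.pair r s)) (.pair (.lam x A r) (.lam x A s))
  | distApp (r s t) : StEq (.app (.pair r s) t) (.pair (.app r t) (.app s t))
  | curry (r s t) : StEq (.app r (.pair s t)) (.app (.app r s) t)
  | pcommII (X x A r) : X ∉ ftv A → StEq (.tlam X (.lam x A r)) (.lam x A (.tlam X r))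
  | pcommEI (X x A B r) : X ∉ ftv A → StEq (.tapp (.lam x A r) B) (.lam x A (.tapp r B))
  | pdistII (X r s) : StEq (.tlam X (.pair r s)) (.pair (.tlam X r) (.tlam X s))
  | pdistEI (r s A) : StEq (.tapp (.pair r s) A) (.pair (.tapp r A) (.tapp s A))
  | pdistIE (X A r) : StEq (.proj (.all X A) (.tlam X r)) (.tlam X (.proj A r))
  | pdistEE (X A B C r) : HasTy r (.all X (.conj B C)) →
      StEq (.tapp (.proj (.all X B) r) A) (.proj (substTy X A B) (.tapp r A))
  | symm {r s} : StEq r s → StEq s r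
  | congLam (x A) {r s} : StEq r s → StEq (.lam x A r) (.lam x A s)
  | congAppL (t) {r s} : StEq r s → StEq (.app r t) (.app s t)
  | congAppR (t) {r s} : StEq r s → StEq (.app t r) (.app t s)
  | congPairL (t) {r s} : StEq r s → StEq (.pair r t) (.pair s t)
  | congPairR (t) {r s} : StEq r s → StEq (.pair t r) (.pair t s)
  | congProj (A) {r s} : StEq r s → StEq (.proj A r) (.proj A s)
  | congTlam (X) {r s} : StEq r s → StEq (.tlam X r) (.tlam X s)
  | congTapp (A) {r s} : StEq r s → StEq (.tapp r A) (.tapp s A)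

/-- One-step reduction ↪ (typed β-reductions and typed projection, closed under contexts). -/
inductive Red : Tm → Tm → Prop
  | beta (x A r s) : HasTy s A → Red (.app (.lam x A r) s) (substTm x s r)
  | tbeta (X A r) : Red (.tapp (.tlam X r) A) (substTyTm X A r)
  | pi (A r s) : HasTy r A → Red (.proj A (.pair r s)) r
  | congLam (x A) {r s} : Red r s → Red (.lam x A r) (.lam x A s)
  | congAppL (t) {r s} : Red r s → Red (.app r t) (.app s t)
  | congAppR (t) {r s} : Red r s → Red (.app t r) (.app t s)
  | congPairL (t) {r s} : Red r s → Red (.pair r t) (.pair s t)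
  | congPairR (t) {r s} : Red r s → Red (.pair t r) (.pair t s)
  | congProj (A) {r s} : Red r s → Red (.proj A r) (.proj A s)
  | congTlam (X) {r s} : Red r s → Red (.tlam X r) (.tlam X s)
  | congTapp (A) {r s} : Red r s → Red (.tapp r A) (.tapp s A)

/-- ⇄*: reflexive-transitive closure of ⇄. -/
def SeqStar : Tm → Tm → Prop := Relation.ReflTransGen StEq

/-- The operational semantics → = ⇄* ∘ ↪ ∘ ⇄*. -/
def Step (r s : Tm) : Prop := ∃ r' s', SeqStar r r' ∧ Red r' s' ∧ SeqStar s' s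

/-- Strong normalisation with respect to →. -/
def SN (r : Tm) : Prop := Acc (fun a b => Step b a) r

/-- The measure P on terms. -/
def Pm : Tm → ℕ
  | .var _ _ => 0
  | .lam _ _ r => Pm r
  | .app r _ => Pm r
  | .pair r s => 1 + Pm r + Pm s
  | .proj _ r => Pm r
  | .tlam _ r => Pm r
  | .tapp r _ => Pm r

/-- The measure M on terms. -/
def Mm : Tm → ℕ
  | .var _ _ => 1
  | .lam _ _ r => 1 + Mm r + Pm r
  | .app r s => Mm r + Mm s + Pm r * Mm s
  | .pair r s => Mm r + Mm s
  | .proj _ r => 1 + Mm r + Pm r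
  | .tlam _ r => 1 + Mm r + Pm r
  | .tapp r _ => 1 + Mm r + Pm r

/-! ### Auxiliary development for `red_prod` -/

set_option maxHeartbeats 1000000

deriving instance DecidableEq for Tm

namespace RedProd

open Relation

/-- Condition-free fragment of ⇄, closed under substitutions. -/
inductive StEqF : Tm → Tm → Prop
  | comm (r s) : StEqF (.pair r s) (.pair s r)
  | assoc (r s t) : StEqF (.pair r (.pair s t)) (.pair (.pair r s) t)
  | distLam (x A r s) : StEqF (.lam x A (.pair r s)) (.pair (.lam x A r) (.lam x A s))
  | distApp (r s t) : StEqF (.app (.pair r s) t) (.pair (.app r t) (.app s t))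
  | pdistII (X r s) : StEqF (.tlam X (.pair r s)) (.pair (.tlam X r) (.tlam X s))
  | pdistEI (r s A) : StEqF (.tapp (.pair r s) A) (.pair (.tapp r A) (.tapp s A))
  | symm {r s} : StEqF r s → StEqF s r
  | congLam (x A) {r s} : StEqF r s → StEqF (.lam x A r) (.lam x A s)
  | congAppL (t) {r s} : StEqF r s → StEqF (.app r t) (.app s t)
  | congPairL (t) {r s} : StEqF r s → StEqF (.pair r t) (.pair s t)
  | congPairR (t) {r s} : StEqF r s → StEqF (.pair t r) (.pair t s)
  | congTlam (X) {r s} : StEqF r s → StEqF (.tlam X r) (.tlam X s)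
  | congTapp (A) {r s} : StEqF r s → StEqF (.tapp r A) (.tapp s A)

theorem StEqF.toStEq {a b : Tm} (h : StEqF a b) : StEq a b := by
  induction h with
  | comm r s => exact .comm r s
  | assoc r s t => exact .assoc r s t
  | distLam x A r s => exact .distLam x A r s
  | distApp r s t => exact .distApp r s t
  | pdistII X r s => exact .pdistII X r s
  | pdistEI r s A => exact .pdistEI r s A
  | symm _ ih => exact .symm ih
  | congLam x A _ ih => exact .congLam x A ih
  | congAppL t _ ih => exact .congAppL t ih
  | congPairL t _ ih => exact .congPairL t ih
  | congPairR t _ ih => exact .congPairR t ih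
  | congTlam X _ ih => exact .congTlam X ih
  | congTapp A _ ih => exact .congTapp A ih

/-- ⇄* for the free fragment. -/
def SeqF : Tm → Tm → Prop := Relation.ReflTransGen StEqF

theorem SeqF.toSeqStar {a b : Tm} (h : SeqF a b) : SeqStar a b :=
  ReflTransGen.mono (fun _ _ h => h.toStEq) _ _ h

theorem SeqF.refl {a : Tm} : SeqF a a := ReflTransGen.refl
theorem SeqF.trans {a b c : Tm} : SeqF a b → SeqF b c → SeqF a c := ReflTransGen.trans
theorem SeqF.single {a b : Tm} (h : StEqF a b) : SeqF a b := ReflTransGen.single h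

theorem SeqF.symm {a b : Tm} (h : SeqF a b) : SeqF b a := by
  induction h with
  | refl => exact .refl
  | tail _ hbc ih => exact (SeqF.single hbc.symm).trans ih

theorem seqStar_refl {a : Tm} : SeqStar a a := ReflTransGen.refl
theorem seqStar_trans {a b c : Tm} : SeqStar a b → SeqStar b c → SeqStar a c := ReflTransGen.trans
theorem seqStar_single {a b : Tm} (h : StEq a b) : SeqStar a b := ReflTransGen.single h

theorem seqStar_symm {a b : Tm} (h : SeqStar a b) : SeqStar b a := by
  induction h with
  | refl => exact seqStar_refl
  | tail _ hbc ih => exact seqStar_trans (seqStar_single hbc.symm) ih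

/- Congruence lemmas for SeqF -/
theorem SeqF.lamC (x A) {r s : Tm} (h : SeqF r s) : SeqF (.lam x A r) (.lam x A s) :=
  ReflTransGen.lift _ (fun _ _ h => StEqF.congLam x A h) _ _ h
theorem SeqF.appL (t) {r s : Tm} (h : SeqF r s) : SeqF (.app r t) (.app s t) :=
  ReflTransGen.lift (fun z => Tm.app z t) (fun _ _ h => StEqF.congAppL t h) _ _ h
theorem SeqF.pairL (t) {r s : Tm} (h : SeqF r s) : SeqF (.pair r t) (.pair s t) :=
  ReflTransGen.lift (fun z => Tm.pair z t) (fun _ _ h => StEqF.congPairL t h) _ _ h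
theorem SeqF.pairR (t) {r s : Tm} (h : SeqF r s) : SeqF (.pair t r) (.pair t s) :=
  ReflTransGen.lift (fun z => Tm.pair t z) (fun _ _ h => StEqF.congPairR t h) _ _ h
theorem SeqF.tlamC (X) {r s : Tm} (h : SeqF r s) : SeqF (.tlam X r) (.tlam X s) :=
  ReflTransGen.lift _ (fun _ _ h => StEqF.congTlam X h) _ _ h
theorem SeqF.tappC (A) {r s : Tm} (h : SeqF r s) : SeqF (.tapp r A) (.tapp s A) :=
  ReflTransGen.lift (fun z => Tm.tapp z A) (fun _ _ h => StEqF.congTapp A h) _ _ h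

theorem SeqF.pairC {a a' b b' : Tm} (h1 : SeqF a a') (h2 : SeqF b b') :
    SeqF (.pair a b) (.pair a' b') := (SeqF.pairL _ h1).trans (SeqF.pairR _ h2)

/- Congruence lemmas for SeqStar -/
theorem seqStar_lam (x A) {r s : Tm} (h : SeqStar r s) : SeqStar (.lam x A r) (.lam x A s) :=
  ReflTransGen.lift _ (fun _ _ h => StEq.congLam x A h) _ _ h
theorem seqStar_appL (t) {r s : Tm} (h : SeqStar r s) : SeqStar (.app r t) (.app s t) :=
  ReflTransGen.lift (fun z => Tm.app z t) (fun _ _ h => StEq.congAppL t h) _ _ h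
theorem seqStar_appR (t) {r s : Tm} (h : SeqStar r s) : SeqStar (.app t r) (.app t s) :=
  ReflTransGen.lift (fun z => Tm.app t z) (fun _ _ h => StEq.congAppR t h) _ _ h
theorem seqStar_pairL (t) {r s : Tm} (h : SeqStar r s) : SeqStar (.pair r t) (.pair s t) :=
  ReflTransGen.lift (fun z => Tm.pair z t) (fun _ _ h => StEq.congPairL t h) _ _ h
theorem seqStar_pairR (t) {r s : Tm} (h : SeqStar r s) : SeqStar (.pair t r) (.pair t s) :=
  ReflTransGen.lift (fun z => Tm.pair t z) (fun _ _ h => StEq.congPairR t h) _ _ h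
theorem seqStar_proj (A) {r s : Tm} (h : SeqStar r s) : SeqStar (.proj A r) (.proj A s) :=
  ReflTransGen.lift _ (fun _ _ h => StEq.congProj A h) _ _ h
theorem seqStar_tlam (X) {r s : Tm} (h : SeqStar r s) : SeqStar (.tlam X r) (.tlam X s) :=
  ReflTransGen.lift _ (fun _ _ h => StEq.congTlam X h) _ _ h
theorem seqStar_tapp (A) {r s : Tm} (h : SeqStar r s) : SeqStar (.tapp r A) (.tapp s A) :=
  ReflTransGen.lift (fun z => Tm.tapp z A) (fun _ _ h => StEq.congTapp A h) _ _ h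

theorem seqStar_pairC {a a' b b' : Tm} (h1 : SeqStar a a') (h2 : SeqStar b b') :
    SeqStar (.pair a b) (.pair a' b') := seqStar_trans (seqStar_pairL _ h1) (seqStar_pairR _ h2)

/-- Right-nested conjunction of a list of terms. -/
def pairList : List Tm → Tm
  | [] => .var 0 (.var 0)
  | [a] => a
  | a :: b :: l => .pair a (pairList (b :: l))

theorem pairList_cons {a : Tm} {l : List Tm} (h : l ≠ []) :
    pairList (a :: l) = .pair a (pairList l) := by
  cases l with
  | nil => exact absurd rfl h
  | cons b l => rfl

@[simp] theorem pairList_cons₂ (a b : Tm) (l : List Tm) :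
    pairList (a :: b :: l) = .pair a (pairList (b :: l)) := rfl

theorem pairList_perm {l l' : List Tm} (h : l.Perm l') : SeqF (pairList l) (pairList l') := by
  induction h with
  | nil => exact .refl
  | @cons x l₁ l₂ h ih =>
    cases l₁ with
    | nil => cases h.symm.eq_nil; exact .refl
    | cons b l =>
      obtain ⟨c, l₂', rfl⟩ : ∃ c l₂', l₂ = c :: l₂' := by
        cases l₂ with
        | nil => exact absurd h.eq_nil (by simp)
        | cons c l₂' => exact ⟨c, l₂', rfl⟩
      rw [pairList_cons₂, pairList_cons₂]
      exact SeqF.pairR _ ih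
  | swap x y l =>
    cases l with
    | nil => exact SeqF.single (StEqF.comm y x)
    | cons b l =>
      rw [pairList_cons₂, pairList_cons₂, pairList_cons₂, pairList_cons₂]
      refine SeqF.trans (SeqF.single (StEqF.assoc y x _)) ?_
      refine SeqF.trans (SeqF.pairL _ (SeqF.single (StEqF.comm y x))) ?_
      exact SeqF.symm (SeqF.single (StEqF.assoc x y _))
  | trans _ _ ih₁ ih₂ => exact ih₁.trans ih₂

theorem pairList_append : ∀ {l₁ l₂ : List Tm}, l₁ ≠ [] → l₂ ≠ [] →
    SeqF (.pair (pairList l₁) (pairList l₂)) (pairList (l₁ ++ l₂)) := by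
  intro l₁
  induction l₁ with
  | nil => intro l₂ h; exact absurd rfl h
  | cons a l ih =>
    intro l₂ _ h₂
    cases l with
    | nil => rw [List.singleton_append, pairList_cons h₂]; exact .refl
    | cons b l' =>
      rw [pairList_cons₂, List.cons_append, List.cons_append, pairList_cons₂]
      rw [← List.cons_append]
      refine SeqF.trans (SeqF.symm (SeqF.single (StEqF.assoc a (pairList (b :: l')) (pairList l₂)))) ?_
      exact SeqF.pairR _ (ih (by simp) h₂)

/- distribution of term contexts over pairList -/
theorem pairList_dist_lam (x A) : ∀ {l : List Tm}, l ≠ [] →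
    SeqF (.lam x A (pairList l)) (pairList (l.map (.lam x A))) := by
  intro l
  induction l with
  | nil => intro h; exact absurd rfl h
  | cons a l ih =>
    intro _
    cases l with
    | nil => exact .refl
    | cons b l' =>
      rw [pairList_cons₂, List.map_cons, List.map_cons, pairList_cons₂]
      refine SeqF.trans (SeqF.single (StEqF.distLam x A a _)) ?_
      exact SeqF.pairR _ (ih (by simp))

theorem pairList_dist_app (t) : ∀ {l : List Tm}, l ≠ [] →
    SeqF (.app (pairList l) t) (pairList (l.map (fun c => .app c t))) := by
  intro l
  induction l with
  | nil => intro h; exact absurd rfl h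
  | cons a l ih =>
    intro _
    cases l with
    | nil => exact .refl
    | cons b l' =>
      rw [pairList_cons₂, List.map_cons, List.map_cons, pairList_cons₂]
      refine SeqF.trans (SeqF.single (StEqF.distApp a _ t)) ?_
      exact SeqF.pairR _ (ih (by simp))

theorem pairList_dist_tlam (X) : ∀ {l : List Tm}, l ≠ [] →
    SeqF (.tlam X (pairList l)) (pairList (l.map (.tlam X))) := by
  intro l
  induction l with
  | nil => intro h; exact absurd rfl h
  | cons a l ih =>
    intro _
    cases l with
    | nil => exact .refl
    | cons b l' =>
      rw [pairList_cons₂, List.map_cons, List.map_cons, pairList_cons₂]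
      refine SeqF.trans (SeqF.single (StEqF.pdistII X a _)) ?_
      exact SeqF.pairR _ (ih (by simp))

theorem pairList_dist_tapp (A) : ∀ {l : List Tm}, l ≠ [] →
    SeqF (.tapp (pairList l) A) (pairList (l.map (fun c => .tapp c A))) := by
  intro l
  induction l with
  | nil => intro h; exact absurd rfl h
  | cons a l ih =>
    intro _
    cases l with
    | nil => exact .refl
    | cons b l' =>
      rw [pairList_cons₂, List.map_cons, List.map_cons, pairList_cons₂]
      refine SeqF.trans (SeqF.single (StEqF.pdistEI a _ A)) ?_
      exact SeqF.pairR _ (ih (by simp))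

/-- Prime components of a term. -/
def comps : Tm → List Tm
  | .pair a b => comps a ++ comps b
  | .lam x A r => (comps r).map (.lam x A)
  | .app r t => (comps r).map (fun c => .app c t)
  | .tlam X r => (comps r).map (.tlam X)
  | .tapp r A => (comps r).map (fun c => .tapp c A)
  | t => [t]

@[simp] theorem comps_var (x A) : comps (.var x A) = [.var x A] := rfl
@[simp] theorem comps_proj (A r) : comps (.proj A r) = [.proj A r] := rfl
@[simp] theorem comps_pair (a b) : comps (.pair a b) = comps a ++ comps b := rfl
@[simp] theorem comps_lam (x A r) : comps (.lam x A r) = (comps r).map (.lam x A) := rfl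
@[simp] theorem comps_app (r t) : comps (.app r t) = (comps r).map (fun c => .app c t) := rfl
@[simp] theorem comps_tlam (X r) : comps (.tlam X r) = (comps r).map (.tlam X) := rfl
@[simp] theorem comps_tapp (r A) : comps (.tapp r A) = (comps r).map (fun c => .tapp c A) := rfl

theorem comps_ne_nil : ∀ r : Tm, comps r ≠ [] := by
  intro r
  induction r with
  | var x A => simp
  | lam x A r ih => simp [ih]
  | app r t ih _ => simp [ih]
  | pair a b iha ihb => simp [iha]
  | proj A r _ => simp
  | tlam X r ih => simp [ih]
  | tapp r A ih => simp [ih]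

/-- Every term is ⇄*-equivalent (in the free fragment) to the conjunction of its components. -/
theorem seqF_comps : ∀ r : Tm, SeqF r (pairList (comps r)) := by
  intro r
  induction r with
  | var x A => exact .refl
  | proj A r _ => exact .refl
  | lam x A r ih =>
    exact SeqF.trans (SeqF.lamC x A ih) (pairList_dist_lam x A (comps_ne_nil r))
  | app r t ih _ =>
    exact SeqF.trans (SeqF.appL t ih) (pairList_dist_app t (comps_ne_nil r))
  | tlam X r ih =>
    exact SeqF.trans (SeqF.tlamC X ih) (pairList_dist_tlam X (comps_ne_nil r))
  | tapp r A ih =>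
    exact SeqF.trans (SeqF.tappC A ih) (pairList_dist_tapp A (comps_ne_nil r))
  | pair a b iha ihb =>
    refine SeqF.trans (SeqF.pairC iha ihb) ?_
    exact pairList_append (comps_ne_nil a) (comps_ne_nil b)

/-! ### Substitution closure of the free fragment -/

theorem StEqF.substTm (x : ℕ) (u : Tm) {a b : Tm} (h : StEqF a b) :
    StEqF (substTm x u a) (substTm x u b) := by
  induction h with
  | comm r s => exact .comm _ _
  | assoc r s t => exact .assoc _ _ _
  | distLam y A r s =>
    by_cases hy : y = x <;> simp [_root_.substTm, hy] <;> exact .distLam _ _ _ _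
  | distApp r s t => exact .distApp _ _ _
  | pdistII X r s => exact .pdistII _ _ _
  | pdistEI r s A => exact .pdistEI _ _ _
  | symm _ ih => exact ih.symm
  | congLam y A h ih =>
    by_cases hy : y = x <;> simp [_root_.substTm, hy]
    · exact .congLam _ _ h
    · exact .congLam y A ih
  | congAppL t _ ih => exact .congAppL _ ih
  | congPairL t _ ih => exact .congPairL _ ih
  | congPairR t _ ih => exact .congPairR _ ih
  | congTlam X _ ih => exact .congTlam _ ih
  | congTapp A _ ih => exact .congTapp _ ih

theorem StEqF.substTyTm (X : ℕ) (B : Ty) {a b : Tm} (h : StEqF a b) :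
    StEqF (substTyTm X B a) (substTyTm X B b) := by
  induction h with
  | comm r s => exact .comm _ _
  | assoc r s t => exact .assoc _ _ _
  | distLam y A r s => exact .distLam _ _ _ _
  | distApp r s t => exact .distApp _ _ _
  | pdistII Y r s =>
    by_cases hy : Y = X <;> simp [_root_.substTyTm, hy] <;> exact .pdistII _ _ _
  | pdistEI r s A => exact .pdistEI _ _ _
  | symm _ ih => exact ih.symm
  | congLam y A _ ih => exact .congLam _ _ ih
  | congAppL t _ ih => exact .congAppL _ ih
  | congPairL t _ ih => exact .congPairL _ ih
  | congPairR t _ ih => exact .congPairR _ ih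
  | congTlam Y h ih =>
    by_cases hy : Y = X <;> simp [_root_.substTyTm, hy]
    · exact .congTlam _ h
    · exact .congTlam Y ih
  | congTapp A _ ih => exact .congTapp _ ih

theorem SeqF.substTm (x : ℕ) (u : Tm) {a b : Tm} (h : SeqF a b) :
    SeqF (substTm x u a) (substTm x u b) :=
  Relation.ReflTransGen.lift _ (fun _ _ h => h.substTm x u) _ _ h

theorem SeqF.substTyTm (X : ℕ) (B : Ty) {a b : Tm} (h : SeqF a b) :
    SeqF (substTyTm X B a) (substTyTm X B b) :=
  Relation.ReflTransGen.lift _ (fun _ _ h => h.substTyTm X B) _ _ h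

/-! ### Multiset machinery -/

/-- The multiset of prime components. -/
def C (r : Tm) : Multiset Tm := (comps r : Multiset Tm)

@[simp] theorem C_pair (a b) : C (.pair a b) = C a + C b := by
  simp [C, Multiset.coe_add]
@[simp] theorem C_lam (x A r) : C (.lam x A r) = (C r).map (.lam x A) := by
  simp [C, Multiset.map_coe]
@[simp] theorem C_app (r t) : C (.app r t) = (C r).map (fun c => .app c t) := by
  simp [C, Multiset.map_coe]
@[simp] theorem C_tlam (X r) : C (.tlam X r) = (C r).map (.tlam X) := by
  simp [C, Multiset.map_coe]
@[simp] theorem C_tapp (r A) : C (.tapp r A) = (C r).map (fun c => .tapp c A) := by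
  simp [C, Multiset.map_coe]
@[simp] theorem C_var (x A) : C (.var x A) = {Tm.var x A} := rfl
@[simp] theorem C_proj (A r) : C (.proj A r) = {Tm.proj A r} := rfl

theorem C_ne_zero (r : Tm) : C r ≠ 0 := by
  simp [C, Multiset.coe_eq_zero, comps_ne_nil r]

theorem rel_of_eq {R : Tm → Tm → Prop} (hR : ∀ a, R a a) {m n : Multiset Tm} (h : m = n) :
    Multiset.Rel R m n := by
  subst h
  induction m using Multiset.induction with
  | empty => exact .zero
  | cons a m ih => exact .cons (hR a) ih

theorem rel_map_of_forall {R : Tm → Tm → Prop} {f g : Tm → Tm} {m : Multiset Tm}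
    (h : ∀ a ∈ m, R (f a) (g a)) : Multiset.Rel R (m.map f) (m.map g) := by
  induction m using Multiset.induction with
  | empty => exact .zero
  | cons a m ih =>
    simp only [Multiset.map_cons]
    exact .cons (h a (by simp)) (ih (fun a ha => h a (by simp [ha])))

theorem rel_symm {R : Tm → Tm → Prop} (hR : ∀ {a b}, R a b → R b a) {m n : Multiset Tm}
    (h : Multiset.Rel R m n) : Multiset.Rel R n m := by
  induction h with
  | zero => exact .zero
  | cons hab _ ih => exact .cons (hR hab) ih

theorem rel_trans {m n p : Multiset Tm} (h1 : Multiset.Rel SeqStar m n)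
    (h2 : Multiset.Rel SeqStar n p) : Multiset.Rel SeqStar m p := by
  induction h1 generalizing p with
  | zero => rw [Multiset.rel_zero_left.mp h2]; exact .zero
  | @cons a b m n hab _ ih =>
    rw [Multiset.rel_cons_left] at h2
    obtain ⟨c, p', hbc, hnp', rfl⟩ := h2
    exact .cons (seqStar_trans hab hbc) (ih hnp')

theorem map_eq_add {f : Tm → Tm} : ∀ {n₁ : Multiset Tm} {m n₂ : Multiset Tm},
    m.map f = n₁ + n₂ → ∃ k₁ k₂, m = k₁ + k₂ ∧ k₁.map f = n₁ ∧ k₂.map f = n₂ := by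
  intro n₁
  induction n₁ using Multiset.induction with
  | empty => intro m n₂ h; exact ⟨0, m, by simp, by simp, by simpa using h⟩
  | @cons a n₁ ih =>
    intro m n₂ h
    have ha : a ∈ m.map f := by rw [h]; simp
    obtain ⟨b, hb, rfl⟩ := Multiset.mem_map.mp ha
    have hm : m = b ::ₘ m.erase b := (Multiset.cons_erase hb).symm
    rw [hm, Multiset.map_cons] at h
    have h' : (m.erase b).map f = n₁ + n₂ := by
      have := congrArg (Multiset.erase · (f b)) h
      simpa using this
    obtain ⟨k₁, k₂, hk, h1, h2⟩ := ih h'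
    exact ⟨b ::ₘ k₁, k₂, by rw [hm, hk]; simp [Multiset.cons_add], by simp [h1], h2⟩

/-- Riesz decomposition for multisets. -/
theorem riesz {m₁ m₂ n₁ n₂ : Multiset Tm} (h : m₁ + m₂ = n₁ + n₂) :
    ∃ a₁ a₂ b₁ b₂ : Multiset Tm,
      n₁ = a₁ + a₂ ∧ n₂ = b₁ + b₂ ∧ m₁ = a₁ + b₁ ∧ m₂ = a₂ + b₂ := by
  refine ⟨m₁ ∩ n₁, n₁ - m₁ ∩ n₁, m₁ - m₁ ∩ n₁, m₂ - (n₁ - m₁ ∩ n₁), ?_, ?_, ?_, ?_⟩ <;>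
  · rw [Multiset.ext]
    intro x
    have hc := congrArg (Multiset.count x) h
    simp only [Multiset.count_add] at hc
    simp only [Multiset.count_add, Multiset.count_sub, Multiset.count_inter]
    omega

/-! ### ⇄ preserves components up to Multiset.Rel SeqStar -/

theorem stEq_rel {s s' : Tm} (h : StEq s s') : Multiset.Rel SeqStar (C s) (C s') := by
  induction h with
  | comm r s => exact rel_of_eq (fun _ => seqStar_refl) (by simp [add_comm])
  | assoc r s t => exact rel_of_eq (fun _ => seqStar_refl) (by simp [add_assoc])
  | distLam x A r s => exact rel_of_eq (fun _ => seqStar_refl) (by simp)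
  | distApp r s t => exact rel_of_eq (fun _ => seqStar_refl) (by simp)
  | curry r s t =>
    simp only [C_app, Multiset.map_map]
    exact rel_map_of_forall (fun a _ => seqStar_single (StEq.curry a s t))
  | pcommII X x A r h =>
    simp only [C_tlam, C_lam, Multiset.map_map]
    exact rel_map_of_forall (fun a _ => seqStar_single (StEq.pcommII X x A a h))
  | pcommEI X x A B r h =>
    simp only [C_tapp, C_lam, Multiset.map_map]
    exact rel_map_of_forall (fun a _ => seqStar_single (StEq.pcommEI X x A B a h))
  | pdistII X r s => exact rel_of_eq (fun _ => seqStar_refl) (by simp)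
  | pdistEI r s A => exact rel_of_eq (fun _ => seqStar_refl) (by simp)
  | pdistIE X A r =>
    simp only [C_proj, C_tlam, C_tapp]
    refine Multiset.Rel.cons ?_ .zero
    exact seqStar_single (StEq.pdistIE X A r)
  | pdistEE X A B C r hty =>
    simp only [C_proj, C_tapp, C_tlam, Multiset.map_singleton]
    refine Multiset.Rel.cons ?_ .zero
    exact seqStar_single (StEq.pdistEE X A B C r hty)
  | symm _ ih => exact rel_symm seqStar_symm ih
  | congLam x A _ ih =>
    simp only [C_lam]
    rw [Multiset.rel_map]
    exact ih.mono (fun a _ b _ h => seqStar_lam x A h)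
  | congAppL t _ ih =>
    simp only [C_app]
    rw [Multiset.rel_map]
    exact ih.mono (fun a _ b _ h => seqStar_appL t h)
  | congAppR t h ih =>
    simp only [C_app]
    exact rel_map_of_forall (fun a _ => seqStar_appR a (seqStar_single h))
  | congPairL t _ ih =>
    simp only [C_pair]
    exact ih.add (rel_of_eq (fun _ => seqStar_refl) rfl)
  | congPairR t _ ih =>
    simp only [C_pair]
    exact (rel_of_eq (fun _ => seqStar_refl) rfl).add ih
  | congProj A h ih =>
    simp only [C_proj]
    exact Multiset.Rel.cons (seqStar_single (StEq.congProj A h)) .zero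
  | congTlam X _ ih =>
    simp only [C_tlam]
    rw [Multiset.rel_map]
    exact ih.mono (fun a _ b _ h => seqStar_tlam X h)
  | congTapp A _ ih =>
    simp only [C_tapp]
    rw [Multiset.rel_map]
    exact ih.mono (fun a _ b _ h => seqStar_tapp A h)

theorem seqStar_rel {s s' : Tm} (h : SeqStar s s') : Multiset.Rel SeqStar (C s) (C s') := by
  induction h with
  | refl => exact rel_of_eq (fun _ => seqStar_refl) rfl
  | tail _ hbc ih => exact rel_trans ih (stEq_rel hbc)

/-! ### Step helpers -/

theorem step_pre {a a' b : Tm} (h : SeqStar a a') (hs : Step a' b) : Step a b := by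
  obtain ⟨w, w', s1, r, s2⟩ := hs
  exact ⟨w, w', seqStar_trans h s1, r, s2⟩

theorem step_post {a b b' : Tm} (hs : Step a b) (h : SeqStar b b') : Step a b' := by
  obtain ⟨w, w', s1, r, s2⟩ := hs
  exact ⟨w, w', s1, r, seqStar_trans s2 h⟩

theorem step_of_red {a b : Tm} (h : Red a b) : Step a b :=
  ⟨a, b, seqStar_refl, h, seqStar_refl⟩

theorem step_pairL (t) {a b : Tm} (h : Step a b) : Step (.pair a t) (.pair b t) := by
  obtain ⟨w, w', s1, r, s2⟩ := h
  exact ⟨.pair w t, .pair w' t, seqStar_pairL t s1, .congPairL t r, seqStar_pairL t s2⟩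

theorem step_pairR (t) {a b : Tm} (h : Step a b) : Step (.pair t a) (.pair t b) := by
  obtain ⟨w, w', s1, r, s2⟩ := h
  exact ⟨.pair t w, .pair t w', seqStar_pairR t s1, .congPairR t r, seqStar_pairR t s2⟩

/-! ### EqM / StepM -/

/-- `m` is realised as a conjunction which is ⇄*-equivalent to `u`. -/
def EqM (m : Multiset Tm) (u : Tm) : Prop :=
  ∃ l : List Tm, l ≠ [] ∧ (l : Multiset Tm) = m ∧ SeqStar (pairList l) u

/-- `m` is realised as a conjunction which →-reduces to `u`. -/
def StepM (m : Multiset Tm) (u : Tm) : Prop :=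
  ∃ l : List Tm, l ≠ [] ∧ (l : Multiset Tm) = m ∧ Step (pairList l) u

theorem EqM_post {m u u'} (h : EqM m u) (h' : SeqStar u u') : EqM m u' := by
  obtain ⟨l, h1, h2, h3⟩ := h
  exact ⟨l, h1, h2, seqStar_trans h3 h'⟩

theorem StepM_post {m u u'} (h : StepM m u) (h' : SeqStar u u') : StepM m u' := by
  obtain ⟨l, h1, h2, h3⟩ := h
  exact ⟨l, h1, h2, step_post h3 h'⟩

theorem toList_ne_nil {b : Multiset Tm} (hb : b ≠ 0) : b.toList ≠ [] := by
  intro h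
  apply hb
  rw [← Multiset.coe_toList b, h]
  rfl

theorem EqM_toList {b : Multiset Tm} (hb : b ≠ 0) : EqM b (pairList b.toList) :=
  ⟨b.toList, toList_ne_nil hb, Multiset.coe_toList b, seqStar_refl⟩

theorem EqM_add {m n u v} (h1 : EqM m u) (h2 : EqM n v) : EqM (m + n) (.pair u v) := by
  obtain ⟨l₁, hl₁, hm₁, hs₁⟩ := h1
  obtain ⟨l₂, hl₂, hm₂, hs₂⟩ := h2
  refine ⟨l₁ ++ l₂, by simp [hl₁], by rw [← Multiset.coe_add, hm₁, hm₂], ?_⟩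
  refine seqStar_trans ((pairList_append hl₁ hl₂).symm.toSeqStar) ?_
  exact seqStar_pairC hs₁ hs₂

theorem StepM_addL {m n u v} (h1 : StepM m u) (h2 : EqM n v) : StepM (m + n) (.pair u v) := by
  obtain ⟨l₁, hl₁, hm₁, hs₁⟩ := h1
  obtain ⟨l₂, hl₂, hm₂, hs₂⟩ := h2
  refine ⟨l₁ ++ l₂, by simp [hl₁], by rw [← Multiset.coe_add, hm₁, hm₂], ?_⟩
  refine step_pre ((pairList_append hl₁ hl₂).symm.toSeqStar) ?_
  refine step_pre (seqStar_pairR _ hs₂) (step_pairL _ hs₁)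

theorem StepM_addR {m n u v} (h1 : EqM m u) (h2 : StepM n v) : StepM (m + n) (.pair u v) := by
  obtain ⟨l₁, hl₁, hm₁, hs₁⟩ := h1
  obtain ⟨l₂, hl₂, hm₂, hs₂⟩ := h2
  refine ⟨l₁ ++ l₂, by simp [hl₁], by rw [← Multiset.coe_add, hm₁, hm₂], ?_⟩
  refine step_pre ((pairList_append hl₁ hl₂).symm.toSeqStar) ?_
  refine step_pre (seqStar_pairL _ hs₁) (step_pairR _ hs₂)

/-- A well-behaved unary term context. -/
structure Ctx1 where
  F : Tm → Tm
  dist : ∀ {l : List Tm}, l ≠ [] → SeqF (F (pairList l)) (pairList (l.map F))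
  seq : ∀ {a b}, SeqStar a b → SeqStar (F a) (F b)
  red : ∀ {a b}, Red a b → Red (F a) (F b)

def ctxLam (x : ℕ) (A : Ty) : Ctx1 :=
  ⟨.lam x A, fun h => pairList_dist_lam x A h, seqStar_lam x A, .congLam x A⟩
def ctxApp (t : Tm) : Ctx1 :=
  ⟨fun c => .app c t, fun h => pairList_dist_app t h, seqStar_appL t, .congAppL t⟩
def ctxTlam (X : ℕ) : Ctx1 :=
  ⟨.tlam X, fun h => pairList_dist_tlam X h, seqStar_tlam X, .congTlam X⟩
def ctxTapp (A : Ty) : Ctx1 :=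
  ⟨fun c => .tapp c A, fun h => pairList_dist_tapp A h, seqStar_tapp A, .congTapp A⟩

theorem EqM_map (c : Ctx1) {m u} (h : EqM m u) : EqM (m.map c.F) (c.F u) := by
  obtain ⟨l, hl, hm, hs⟩ := h
  refine ⟨l.map c.F, by simp [hl], by rw [← Multiset.map_coe, hm], ?_⟩
  exact seqStar_trans ((c.dist hl).symm.toSeqStar) (c.seq hs)

theorem StepM_map (c : Ctx1) {m u} (h : StepM m u) : StepM (m.map c.F) (c.F u) := by
  obtain ⟨l, hl, hm, hs⟩ := h
  refine ⟨l.map c.F, by simp [hl], by rw [← Multiset.map_coe, hm], ?_⟩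
  refine step_pre ((c.dist hl).symm.toSeqStar) ?_
  obtain ⟨w, w', s1, r, s2⟩ := hs
  exact ⟨c.F w, c.F w', c.seq s1, c.red r, c.seq s2⟩

/-! ### padding -/

/-- Adjoin passive components `b` to a term `v`. -/
noncomputable def pad (v : Tm) (b : Multiset Tm) : Tm :=
  if b = 0 then v else .pair v (pairList b.toList)

theorem pad_zero (v : Tm) : pad v 0 = v := by simp [pad]
theorem pad_ne (v : Tm) {b : Multiset Tm} (hb : b ≠ 0) :
    pad v b = .pair v (pairList b.toList) := by simp [pad, hb]

theorem StepM_pad {a : Multiset Tm} {v : Tm} (h : StepM a v) (b : Multiset Tm) :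
    StepM (a + b) (pad v b) := by
  by_cases hb : b = 0
  · subst hb; simpa [pad_zero] using h
  · rw [pad_ne v hb]; exact StepM_addL h (EqM_toList hb)

theorem EqM_pad {a : Multiset Tm} {v : Tm} (h : EqM a v) (b : Multiset Tm) :
    EqM (a + b) (pad v b) := by
  by_cases hb : b = 0
  · subst hb; simpa [pad_zero] using h
  · rw [pad_ne v hb]; exact EqM_add h (EqM_toList hb)

theorem C_coe (r : Tm) : ((comps r : List Tm) : Multiset Tm) = C r := rfl

theorem StepM_whole {r r' : Tm} (hred : Red r r') (b : Multiset Tm) :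
    StepM (C r + b) (pad r' b) := by
  by_cases hb : b = 0
  · subst hb
    refine ⟨comps r, comps_ne_nil r, by simp [C_coe], ?_⟩
    rw [pad_zero]
    exact step_pre (seqF_comps r).symm.toSeqStar (step_of_red hred)
  · rw [pad_ne r' hb]
    refine ⟨comps r ++ b.toList, by simp [comps_ne_nil r], ?_, ?_⟩
    · rw [← Multiset.coe_add, C_coe, Multiset.coe_toList]
    · refine step_pre ((pairList_append (comps_ne_nil r) (toList_ne_nil hb)).symm.toSeqStar) ?_
      refine step_pre (seqStar_pairL _ (seqF_comps r).symm.toSeqStar) ?_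
      exact step_pairL _ (step_of_red hred)

/-! ### splitting a term along a decomposition of its components -/

theorem split_two (r : Tm) {k₁ k₂ : Multiset Tm} (h : C r = k₁ + k₂)
    (h₁ : k₁ ≠ 0) (h₂ : k₂ ≠ 0) :
    ∃ l₁ l₂ : List Tm, l₁ ≠ [] ∧ l₂ ≠ [] ∧ (↑l₁ : Multiset Tm) = k₁ ∧ (↑l₂ : Multiset Tm) = k₂ ∧
      SeqF r (.pair (pairList l₁) (pairList l₂)) := by
  refine ⟨k₁.toList, k₂.toList, toList_ne_nil h₁, toList_ne_nil h₂,
    Multiset.coe_toList k₁, Multiset.coe_toList k₂, ?_⟩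
  have hperm : (comps r).Perm (k₁.toList ++ k₂.toList) := by
    rw [← Multiset.coe_eq_coe, ← Multiset.coe_add, C_coe]
    simp [h]
  refine SeqF.trans (seqF_comps r) ?_
  refine SeqF.trans (pairList_perm hperm) ?_
  exact (pairList_append (toList_ne_nil h₁) (toList_ne_nil h₂)).symm

/-! ### matching along Rel SeqStar -/

theorem rel_pairList : ∀ {l₁ : List Tm}, l₁ ≠ [] → ∀ {m : Multiset Tm},
    Multiset.Rel SeqStar (↑l₁) m →
    ∃ l₂ : List Tm, l₂ ≠ [] ∧ (↑l₂ : Multiset Tm) = m ∧ SeqStar (pairList l₁) (pairList l₂) := by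
  intro l₁
  induction l₁ with
  | nil => intro h; exact absurd rfl h
  | cons a l ih =>
    intro _ m hrel
    rw [show ((a :: l : List Tm) : Multiset Tm) = a ::ₘ ↑l from rfl,
        Multiset.rel_cons_left] at hrel
    obtain ⟨b, n, hab, hln, rfl⟩ := hrel
    cases l with
    | nil =>
      have hln' : Multiset.Rel SeqStar 0 n := by simpa using hln
      have hn : n = 0 := Multiset.rel_zero_left.mp hln' 
      subst hn
      exact ⟨[b], by simp, rfl, hab⟩
    | cons c l' =>
      obtain ⟨l₂, hl₂, rfl, hs⟩ := ih (by simp) hln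
      refine ⟨b :: l₂, by simp, rfl, ?_⟩
      rw [pairList_cons₂, pairList_cons hl₂]
      exact seqStar_pairC hab hs

theorem seqStar_of_eqm {r : Tm} {m : Multiset Tm} {u : Tm}
    (hrel : Multiset.Rel SeqStar (C r) m) (h : EqM m u) : SeqStar r u := by
  obtain ⟨l, hl, rfl, hs⟩ := h
  rw [← C_coe r] at hrel
  obtain ⟨l₂, hl₂, hc, hs'⟩ := rel_pairList (comps_ne_nil r) hrel
  have hperm : l₂.Perm l := Multiset.coe_eq_coe.mp hc
  refine seqStar_trans (seqF_comps r).toSeqStar ?_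
  refine seqStar_trans hs' ?_
  exact seqStar_trans (pairList_perm hperm).toSeqStar hs

theorem step_of_stepm {r : Tm} {m : Multiset Tm} {u : Tm}
    (hrel : Multiset.Rel SeqStar (C r) m) (h : StepM m u) : Step r u := by
  obtain ⟨l, hl, rfl, hs⟩ := h
  rw [← C_coe r] at hrel
  obtain ⟨l₂, hl₂, hc, hs'⟩ := rel_pairList (comps_ne_nil r) hrel
  have hperm : l₂.Perm l := Multiset.coe_eq_coe.mp hc
  refine step_pre (seqStar_trans (seqF_comps r).toSeqStar hs') ?_
  exact step_pre (pairList_perm hperm).toSeqStar hs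

/-! ### conclusion predicate -/

def Concl (m₁ m₂ : Multiset Tm) (u₁ u₂ : Tm) : Prop :=
  (StepM m₁ u₁ ∧ StepM m₂ u₂) ∨ (StepM m₁ u₁ ∧ EqM m₂ u₂) ∨ (EqM m₁ u₁ ∧ StepM m₂ u₂)

theorem Concl.imp {a₁ a₂ m₁ m₂ : Multiset Tm} {v₁ v₂ u₁ u₂ : Tm}
    (h : Concl a₁ a₂ v₁ v₂)
    (fS₁ : StepM a₁ v₁ → StepM m₁ u₁) (fE₁ : EqM a₁ v₁ → EqM m₁ u₁)
    (fS₂ : StepM a₂ v₂ → StepM m₂ u₂) (fE₂ : EqM a₂ v₂ → EqM m₂ u₂) :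
    Concl m₁ m₂ u₁ u₂ := by
  rcases h with ⟨x, y⟩ | ⟨x, y⟩ | ⟨x, y⟩
  · exact Or.inl ⟨fS₁ x, fS₂ y⟩
  · exact Or.inr (Or.inl ⟨fS₁ x, fE₂ y⟩)
  · exact Or.inr (Or.inr ⟨fE₁ x, fS₂ y⟩)

/-! ### padding pairs -/

theorem seqStar_toList {t₀ : Tm} {b : Multiset Tm} (h : C t₀ = b) :
    SeqStar t₀ (pairList b.toList) := by
  refine seqStar_trans (seqF_comps t₀).toSeqStar ?_
  refine (pairList_perm ?_).toSeqStar
  rw [← Multiset.coe_eq_coe, C_coe, Multiset.coe_toList, h]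

theorem seqStar_pair_toList {t₀ : Tm} {b₁ b₂ : Multiset Tm} (h : C t₀ = b₁ + b₂)
    (h₁ : b₁ ≠ 0) (h₂ : b₂ ≠ 0) :
    SeqStar t₀ (.pair (pairList b₁.toList) (pairList b₂.toList)) := by
  refine seqStar_trans (seqStar_toList h) ?_
  refine seqStar_trans (pairList_perm ?_).toSeqStar
    (pairList_append (toList_ne_nil h₁) (toList_ne_nil h₂)).symm.toSeqStar
  rw [← Multiset.coe_eq_coe, Multiset.coe_toList, ← Multiset.coe_add,
      Multiset.coe_toList, Multiset.coe_toList]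

/-- `⟨⟨v₁,v₂⟩, t₀⟩ ⇄* ⟨v₁ padded with b₁, v₂ padded with b₂⟩`. -/
theorem padpair {t₀ v₁ v₂ : Tm} {b₁ b₂ : Multiset Tm} (h : C t₀ = b₁ + b₂) :
    SeqStar (.pair (.pair v₁ v₂) t₀) (.pair (pad v₁ b₁) (pad v₂ b₂)) := by
  by_cases h₁ : b₁ = 0
  · subst h₁
    have h₂ : b₂ ≠ 0 := by intro hc; exact C_ne_zero t₀ (by simp [hc] at h; exact h)
    rw [pad_zero, pad_ne _ h₂]
    simp only [zero_add] at h
    refine seqStar_trans (seqStar_pairR _ (seqStar_toList h)) ?_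
    exact seqStar_single (StEq.symm (StEq.assoc v₁ v₂ _))
  by_cases h₂ : b₂ = 0
  · subst h₂
    rw [pad_zero, pad_ne _ h₁]
    simp only [add_zero] at h
    refine seqStar_trans (seqStar_pairR _ (seqStar_toList h)) ?_
    refine seqStar_trans (seqStar_single (StEq.symm (StEq.assoc v₁ v₂ _))) ?_
    refine seqStar_trans (seqStar_pairR _ (seqStar_single (StEq.comm v₂ _))) ?_
    exact seqStar_single (StEq.assoc v₁ _ v₂)
  · rw [pad_ne _ h₁, pad_ne _ h₂]
    refine seqStar_trans (seqStar_pairR _ (seqStar_pair_toList h h₁ h₂)) ?_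
    set Q₁ := pairList b₁.toList
    set Q₂ := pairList b₂.toList
    refine seqStar_trans (seqStar_single (StEq.symm (StEq.assoc v₁ v₂ (.pair Q₁ Q₂)))) ?_
    refine seqStar_trans (seqStar_pairR _ (seqStar_single (StEq.assoc v₂ Q₁ Q₂))) ?_
    refine seqStar_trans (seqStar_pairR _ (seqStar_pairL _ (seqStar_single (StEq.comm v₂ Q₁)))) ?_
    refine seqStar_trans (seqStar_pairR _ (seqStar_single (StEq.symm (StEq.assoc Q₁ v₂ Q₂)))) ?_
    exact seqStar_single (StEq.assoc v₁ Q₁ (.pair v₂ Q₂))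

/-! ### the pair cases of the main lemma -/

theorem pair_case {r r' t₀ : Tm} (hred : Red r r')
    (ih : ∀ {a₁ a₂ : Multiset Tm}, C r = a₁ + a₂ → a₁ ≠ 0 → a₂ ≠ 0 →
      ∃ v₁ v₂, SeqStar r' (.pair v₁ v₂) ∧ Concl a₁ a₂ v₁ v₂)
    {m₁ m₂ : Multiset Tm} (hEq : C r + C t₀ = m₁ + m₂) (h₁ : m₁ ≠ 0) (h₂ : m₂ ≠ 0) :
    ∃ u₁ u₂, SeqStar (.pair r' t₀) (.pair u₁ u₂) ∧ Concl m₁ m₂ u₁ u₂ := by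
  obtain ⟨a₁, b₁, a₂, b₂, hm₁, hm₂, hr, ht⟩ := riesz hEq
  subst hm₁ hm₂
  by_cases ha₁ : a₁ = 0
  · -- all of r goes to the m₂ side
    subst ha₁
    rw [zero_add] at hr
    have hb₁ : b₁ ≠ 0 := by simpa using h₁
    refine ⟨pairList b₁.toList, pad r' b₂, ?_, ?_⟩
    · by_cases hb₂ : b₂ = 0
      · subst hb₂
        rw [add_zero] at ht
        rw [pad_zero]
        refine seqStar_trans (seqStar_pairR _ (seqStar_toList ht)) ?_
        exact seqStar_single (StEq.comm r' _)
      · rw [pad_ne _ hb₂]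
        refine seqStar_trans (seqStar_pairR _ (seqStar_pair_toList ht hb₁ hb₂)) ?_
        set Q₁ := pairList b₁.toList
        set Q₂ := pairList b₂.toList
        refine seqStar_trans (seqStar_single (StEq.comm r' (.pair Q₁ Q₂))) ?_
        refine seqStar_trans (seqStar_single (StEq.symm (StEq.assoc Q₁ Q₂ r'))) ?_
        exact seqStar_pairR _ (seqStar_single (StEq.comm Q₂ r'))
    · refine Or.inr (Or.inr ⟨?_, ?_⟩)
      · simpa using EqM_toList hb₁
      · rw [← hr]
        exact StepM_whole hred b₂
  by_cases ha₂ : a₂ = 0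
  · -- all of r goes to the m₁ side
    subst ha₂
    rw [add_zero] at hr
    have hb₂ : b₂ ≠ 0 := by simpa using h₂
    refine ⟨pad r' b₁, pairList b₂.toList, ?_, ?_⟩
    · by_cases hb₁ : b₁ = 0
      · subst hb₁
        rw [zero_add] at ht
        rw [pad_zero]
        exact seqStar_pairR _ (seqStar_toList ht)
      · rw [pad_ne _ hb₁]
        refine seqStar_trans (seqStar_pairR _ (seqStar_pair_toList ht hb₁ hb₂)) ?_
        exact seqStar_single (StEq.assoc r' _ _)
    · refine Or.inr (Or.inl ⟨?_, ?_⟩)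
      · rw [← hr]
        exact StepM_whole hred b₁
      · simpa using EqM_toList hb₂
  · obtain ⟨v₁, v₂, hs, hc⟩ := ih hr ha₁ ha₂
    refine ⟨pad v₁ b₁, pad v₂ b₂, ?_, ?_⟩
    · exact seqStar_trans (seqStar_pairL _ hs) (padpair ht)
    · exact hc.imp (fun h => StepM_pad h b₁) (fun h => EqM_pad h b₁)
        (fun h => StepM_pad h b₂) (fun h => EqM_pad h b₂)

/-! ### the main lemma -/

theorem card_one_absurd {c : Tm} {m₁ m₂ : Multiset Tm}
    (h : ({c} : Multiset Tm) = m₁ + m₂) (h₁ : m₁ ≠ 0) (h₂ : m₂ ≠ 0) : False := by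
  have hc := congrArg Multiset.card h
  simp only [Multiset.card_singleton, Multiset.card_add] at hc
  have hc₁ : 0 < Multiset.card m₁ := Multiset.card_pos.mpr h₁
  have hc₂ : 0 < Multiset.card m₂ := Multiset.card_pos.mpr h₂
  omega

theorem red_main {s t : Tm} (hred : Red s t) : ∀ {m₁ m₂ : Multiset Tm},
    C s = m₁ + m₂ → m₁ ≠ 0 → m₂ ≠ 0 →
    ∃ u₁ u₂, SeqStar t (.pair u₁ u₂) ∧ Concl m₁ m₂ u₁ u₂ := by
  induction hred with
  | beta x A r u hty =>
    intro m₁ m₂ hEq h₁ h₂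
    rw [C_app, C_lam, Multiset.map_map] at hEq
    obtain ⟨k₁, k₂, hk, hm₁, hm₂⟩ := map_eq_add hEq
    have hk₁ : k₁ ≠ 0 := by rintro rfl; rw [Multiset.map_zero] at hm₁; exact h₁ hm₁.symm
    have hk₂ : k₂ ≠ 0 := by rintro rfl; rw [Multiset.map_zero] at hm₂; exact h₂ hm₂.symm
    obtain ⟨l₁, l₂, hl₁, hl₂, hc₁, hc₂, hsp⟩ := split_two r hk hk₁ hk₂
    refine ⟨substTm x u (pairList l₁), substTm x u (pairList l₂), ?_, ?_⟩
    · exact (hsp.substTm x u).toSeqStar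
    · left
      constructor
      · refine ⟨l₁.map (fun c => .app (.lam x A c) u), by simp [hl₁], ?_, ?_⟩
        · rw [← Multiset.map_coe, hc₁, ← hm₁]
          rfl
        · refine step_pre ?_ (step_of_red (Red.beta x A (pairList l₁) u hty))
          have d1 : SeqF (.app (.lam x A (pairList l₁)) u)
              (pairList ((l₁.map (.lam x A)).map (fun c => .app c u))) :=
            SeqF.trans (SeqF.appL u (pairList_dist_lam x A hl₁))
              (pairList_dist_app u (by simp [hl₁]))
          rw [List.map_map] at d1
          exact d1.symm.toSeqStar
      · refine ⟨l₂.map (fun c => .app (.lam x A c) u), by simp [hl₂], ?_, ?_⟩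
        · rw [← Multiset.map_coe, hc₂, ← hm₂]
          rfl
        · refine step_pre ?_ (step_of_red (Red.beta x A (pairList l₂) u hty))
          have d1 : SeqF (.app (.lam x A (pairList l₂)) u)
              (pairList ((l₂.map (.lam x A)).map (fun c => .app c u))) :=
            SeqF.trans (SeqF.appL u (pairList_dist_lam x A hl₂))
              (pairList_dist_app u (by simp [hl₂]))
          rw [List.map_map] at d1
          exact d1.symm.toSeqStar
  | tbeta X A r =>
    intro m₁ m₂ hEq h₁ h₂
    rw [C_tapp, C_tlam, Multiset.map_map] at hEq
    obtain ⟨k₁, k₂, hk, hm₁, hm₂⟩ := map_eq_add hEq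
    have hk₁ : k₁ ≠ 0 := by rintro rfl; rw [Multiset.map_zero] at hm₁; exact h₁ hm₁.symm
    have hk₂ : k₂ ≠ 0 := by rintro rfl; rw [Multiset.map_zero] at hm₂; exact h₂ hm₂.symm
    obtain ⟨l₁, l₂, hl₁, hl₂, hc₁, hc₂, hsp⟩ := split_two r hk hk₁ hk₂
    refine ⟨substTyTm X A (pairList l₁), substTyTm X A (pairList l₂), ?_, ?_⟩
    · exact (hsp.substTyTm X A).toSeqStar
    · left
      constructor
      · refine ⟨l₁.map (fun c => .tapp (.tlam X c) A), by simp [hl₁], ?_, ?_⟩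
        · rw [← Multiset.map_coe, hc₁, ← hm₁]
          rfl
        · refine step_pre ?_ (step_of_red (Red.tbeta X A (pairList l₁)))
          have d1 : SeqF (.tapp (.tlam X (pairList l₁)) A)
              (pairList ((l₁.map (.tlam X)).map (fun c => .tapp c A))) :=
            SeqF.trans (SeqF.tappC A (pairList_dist_tlam X hl₁))
              (pairList_dist_tapp A (by simp [hl₁]))
          rw [List.map_map] at d1
          exact d1.symm.toSeqStar
      · refine ⟨l₂.map (fun c => .tapp (.tlam X c) A), by simp [hl₂], ?_, ?_⟩
        · rw [← Multiset.map_coe, hc₂, ← hm₂]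
          rfl
        · refine step_pre ?_ (step_of_red (Red.tbeta X A (pairList l₂)))
          have d1 : SeqF (.tapp (.tlam X (pairList l₂)) A)
              (pairList ((l₂.map (.tlam X)).map (fun c => .tapp c A))) :=
            SeqF.trans (SeqF.tappC A (pairList_dist_tlam X hl₂))
              (pairList_dist_tapp A (by simp [hl₂]))
          rw [List.map_map] at d1
          exact d1.symm.toSeqStar
  | pi A r u hty =>
    intro m₁ m₂ hEq h₁ h₂
    rw [C_proj] at hEq
    exact absurd (card_one_absurd hEq h₁ h₂) not_false
  | congLam x A hr ih =>
    intro m₁ m₂ hEq h₁ h₂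
    rw [C_lam] at hEq
    obtain ⟨k₁, k₂, hk, hm₁, hm₂⟩ := map_eq_add hEq
    have hk₁ : k₁ ≠ 0 := by rintro rfl; rw [Multiset.map_zero] at hm₁; exact h₁ hm₁.symm
    have hk₂ : k₂ ≠ 0 := by rintro rfl; rw [Multiset.map_zero] at hm₂; exact h₂ hm₂.symm
    obtain ⟨v₁, v₂, hs, hc⟩ := ih hk hk₁ hk₂
    refine ⟨.lam x A v₁, .lam x A v₂, ?_, ?_⟩
    · exact seqStar_trans (seqStar_lam x A hs) (seqStar_single (StEq.distLam x A v₁ v₂))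
    · subst hm₁ hm₂
      exact hc.imp (StepM_map (ctxLam x A)) (EqM_map (ctxLam x A))
        (StepM_map (ctxLam x A)) (EqM_map (ctxLam x A))
  | congAppL t₀ hr ih =>
    intro m₁ m₂ hEq h₁ h₂
    rw [C_app] at hEq
    obtain ⟨k₁, k₂, hk, hm₁, hm₂⟩ := map_eq_add hEq
    have hk₁ : k₁ ≠ 0 := by rintro rfl; rw [Multiset.map_zero] at hm₁; exact h₁ hm₁.symm
    have hk₂ : k₂ ≠ 0 := by rintro rfl; rw [Multiset.map_zero] at hm₂; exact h₂ hm₂.symm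
    obtain ⟨v₁, v₂, hs, hc⟩ := ih hk hk₁ hk₂
    refine ⟨.app v₁ t₀, .app v₂ t₀, ?_, ?_⟩
    · exact seqStar_trans (seqStar_appL t₀ hs) (seqStar_single (StEq.distApp v₁ v₂ t₀))
    · subst hm₁ hm₂
      exact hc.imp (StepM_map (ctxApp t₀)) (EqM_map (ctxApp t₀))
        (StepM_map (ctxApp t₀)) (EqM_map (ctxApp t₀))
  | @congAppR t₀ r r' hr =>
    intro m₁ m₂ hEq h₁ h₂
    rw [C_app] at hEq
    obtain ⟨k₁, k₂, hk, hm₁, hm₂⟩ := map_eq_add hEq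
    have hk₁ : k₁ ≠ 0 := by rintro rfl; rw [Multiset.map_zero] at hm₁; exact h₁ hm₁.symm
    have hk₂ : k₂ ≠ 0 := by rintro rfl; rw [Multiset.map_zero] at hm₂; exact h₂ hm₂.symm
    obtain ⟨l₁, l₂, hl₁, hl₂, hc₁, hc₂, hsp⟩ := split_two t₀ hk hk₁ hk₂
    refine ⟨.app (pairList l₁) r', .app (pairList l₂) r', ?_, ?_⟩
    · refine seqStar_trans (seqStar_appL r' hsp.toSeqStar) ?_
      exact seqStar_single (StEq.distApp (pairList l₁) (pairList l₂) r')
    · left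
      constructor
      · refine ⟨l₁.map (fun c => .app c r), by simp [hl₁], ?_, ?_⟩
        · rw [← Multiset.map_coe, hc₁, ← hm₁]
        · exact step_pre (pairList_dist_app r hl₁).symm.toSeqStar
            (step_of_red (Red.congAppR _ hr))
      · refine ⟨l₂.map (fun c => .app c r), by simp [hl₂], ?_, ?_⟩
        · rw [← Multiset.map_coe, hc₂, ← hm₂]
        · exact step_pre (pairList_dist_app r hl₂).symm.toSeqStar
            (step_of_red (Red.congAppR _ hr))
  | congPairL t₀ hr ih =>
    intro m₁ m₂ hEq h₁ h₂
    rw [C_pair] at hEq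
    exact pair_case hr (fun h a b => ih h a b) hEq h₁ h₂
  | @congPairR t₀ r r' hr ih =>
    intro m₁ m₂ hEq h₁ h₂
    rw [C_pair, add_comm] at hEq
    obtain ⟨u₁, u₂, hs, hc⟩ := pair_case hr (fun h a b => ih h a b) hEq h₁ h₂
    exact ⟨u₁, u₂, seqStar_trans (seqStar_single (StEq.comm t₀ r')) hs, hc⟩
  | congProj A hr ih =>
    intro m₁ m₂ hEq h₁ h₂
    rw [C_proj] at hEq
    exact absurd (card_one_absurd hEq h₁ h₂) not_false
  | congTlam X hr ih =>
    intro m₁ m₂ hEq h₁ h₂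
    rw [C_tlam] at hEq
    obtain ⟨k₁, k₂, hk, hm₁, hm₂⟩ := map_eq_add hEq
    have hk₁ : k₁ ≠ 0 := by rintro rfl; rw [Multiset.map_zero] at hm₁; exact h₁ hm₁.symm
    have hk₂ : k₂ ≠ 0 := by rintro rfl; rw [Multiset.map_zero] at hm₂; exact h₂ hm₂.symm
    obtain ⟨v₁, v₂, hs, hc⟩ := ih hk hk₁ hk₂
    refine ⟨.tlam X v₁, .tlam X v₂, ?_, ?_⟩
    · exact seqStar_trans (seqStar_tlam X hs) (seqStar_single (StEq.pdistII X v₁ v₂))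
    · subst hm₁ hm₂
      exact hc.imp (StepM_map (ctxTlam X)) (EqM_map (ctxTlam X))
        (StepM_map (ctxTlam X)) (EqM_map (ctxTlam X))
  | congTapp A hr ih =>
    intro m₁ m₂ hEq h₁ h₂
    rw [C_tapp] at hEq
    obtain ⟨k₁, k₂, hk, hm₁, hm₂⟩ := map_eq_add hEq
    have hk₁ : k₁ ≠ 0 := by rintro rfl; rw [Multiset.map_zero] at hm₁; exact h₁ hm₁.symm
    have hk₂ : k₂ ≠ 0 := by rintro rfl; rw [Multiset.map_zero] at hm₂; exact h₂ hm₂.symm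
    obtain ⟨v₁, v₂, hs, hc⟩ := ih hk hk₁ hk₂
    refine ⟨.tapp v₁ A, .tapp v₂ A, ?_, ?_⟩
    · exact seqStar_trans (seqStar_tapp A hs) (seqStar_single (StEq.pdistEI v₁ v₂ A))
    · subst hm₁ hm₂
      exact hc.imp (StepM_map (ctxTapp A)) (EqM_map (ctxTapp A))
        (StepM_map (ctxTapp A)) (EqM_map (ctxTapp A))

end RedProd

/-- Reduction of a product. -/
theorem red_prod (r₁ r₂ s t : Tm) (h1 : SeqStar (.pair r₁ r₂) s) (h2 : Red s t) :
    ∃ u₁ u₂, SeqStar t (.pair u₁ u₂) ∧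
      ((Step r₁ u₁ ∧ Step r₂ u₂) ∨
       (Step r₁ u₁ ∧ SeqStar r₂ u₂) ∨
       (SeqStar r₁ u₁ ∧ Step r₂ u₂)) := by
  open RedProd in
  have hrel := seqStar_rel h1
  rw [C_pair] at hrel
  obtain ⟨m₁, m₂, hr₁, hr₂, hsum⟩ := Multiset.rel_add_left.mp hrel
  have h₁ : m₁ ≠ 0 := by
    intro h
    have hcard := Multiset.card_eq_card_of_rel hr₁
    rw [h, Multiset.card_zero] at hcard
    exact C_ne_zero r₁ (Multiset.card_eq_zero.mp hcard)
  have h₂ : m₂ ≠ 0 := by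
    intro h
    have hcard := Multiset.card_eq_card_of_rel hr₂
    rw [h, Multiset.card_zero] at hcard
    exact C_ne_zero r₂ (Multiset.card_eq_zero.mp hcard)
  obtain ⟨u₁, u₂, hs, hc⟩ := red_main h2 hsum h₁ h₂
  refine ⟨u₁, u₂, hs, ?_⟩
  rcases hc with ⟨x, y⟩ | ⟨x, y⟩ | ⟨x, y⟩
  · exact Or.inl ⟨step_of_stepm hr₁ x, step_of_stepm hr₂ y⟩
  · exact Or.inr (Or.inl ⟨step_of_stepm hr₁ x, seqStar_of_eqm hr₂ y⟩)
  · exact Or.inr (Or.inr ⟨seqStar_of_eqm hr₁ x, step_of_stepm hr₂ y⟩)
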